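/- Let Ĝ be the spectral-extremal gem-free graph as above with extremal vertex û, and suppose u_1, u_2, u_3 ∈ N_+(û) induce a triangle. If none of u_1, u_2, u_3 has a neighbor outside N[û], then x_{u_i} < (10/31) x_{û} for each i, where x is the Perron vector of Ĝ. -/

import Mathlib

open scoped Classical
open SimpleGraph Matrix

def ContainsCopy {α β : Type*} (H : SimpleGraph α) (G : SimpleGraph β) : Prop :=
  ∃ f : α ↪ β, ∀ a b, H.Adj a b → G.Adj (f a) (f b)

def gem : SimpleGraph (Fin 5) :=
  SimpleGraph.fromRel (fun a b => (b.val = a.val + 1 ∧ b.val ≤ 3) ∨ b = 4)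

def bookS (k : ℕ) : SimpleGraph (Fin 2 ⊕ Fin k) :=
  SimpleGraph.fromRel (fun a _ => a.isLeft = true)

def pendantS (s t : ℕ) : SimpleGraph (Fin 2 ⊕ (Fin s ⊕ Fin t)) :=
  SimpleGraph.fromRel (fun a b =>
    match a, b with
    | Sum.inl _, Sum.inl _ => True
    | Sum.inl _, Sum.inr (Sum.inl _) => True
    | Sum.inl i, Sum.inr (Sum.inr _) => i = 0
    | _, _ => False)

def starG (r : ℕ) : SimpleGraph (Fin (r + 1)) :=
  SimpleGraph.fromRel (fun a _ => a = 0)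

noncomputable def specRad {V : Type*} [Fintype V] (G : SimpleGraph V) : ℝ :=
  sSup {μ : ℝ | Module.End.HasEigenvalue (Matrix.mulVecLin (G.adjMatrix ℝ)) μ}

noncomputable def edgeCount {V : Type*} [Fintype V] (G : SimpleGraph V) : ℕ :=
  G.edgeFinset.card

noncomputable def edgesIn {V : Type*} [Fintype V] (G : SimpleGraph V) (S : Finset V) : ℕ :=
  (G.edgeFinset.filter (fun e => ∀ v ∈ e, v ∈ S)).card

noncomputable def N0 {V : Type*} [Fintype V] (G : SimpleGraph V) (u : V) : Finset V :=
  (G.neighborFinset u).filter (fun v => ∀ w ∈ G.neighborFinset u, ¬ G.Adj v w)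

noncomputable def Nplus {V : Type*} [Fintype V] (G : SimpleGraph V) (u : V) : Finset V :=
  G.neighborFinset u \ N0 G u

noncomputable def Wset {V : Type*} [Fintype V] (G : SimpleGraph V) (u : V) : Finset V :=
  Finset.univ \ insert u (G.neighborFinset u)

def InFamily (m : ℕ) {V : Type*} [Fintype V] (G : SimpleGraph V) : Prop :=
  ¬ ContainsCopy gem G ∧ edgeCount G = m ∧ (∀ v : V, ∃ w, G.Adj v w) ∧
    ¬ Nonempty (G ≃g bookS ((m - 1) / 2))

def MaxInFamily (m : ℕ) {V : Type*} [Fintype V] (G : SimpleGraph V) : Prop :=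
  InFamily m G ∧ ∀ (n : ℕ) (H : SimpleGraph (Fin n)), InFamily m H → specRad H ≤ specRad G

def IsCutVertex {V : Type*} (G : SimpleGraph V) (v : V) : Prop :=
  ∃ a b : {x : V // x ≠ v}, G.Reachable a.1 b.1 ∧
    ¬ (G.induce {x : V | x ≠ v}).Reachable a b

/-! Gem-freeness pins down the neighbourhood of each `uᵢ`: a neighbour `w` of `u₁` other than
`û, u₂, u₃` lies in `N(û)`, and then `w u₁ u₂ u₃` is a path in `N(û)`, i.e. a gem with apex `û`.
So `N(u₁) = {û, u₂, u₃}` and cyclically; subtracting the eigen-equations gives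
`x_{u₁} = x_{u₂} = x_{u₃}` and `(ρ - 2) x_{u₁} = x_û`, and the bound `10/31 = 1/3.1` is exactly
`ρ > 5.1`.

That lower bound comes from a member of the family: `K₂ ∨ 10K₁` with two pendant edges at one
apex, plus `m - 23` disjoint edges. All of its triangles contain both apices, so it is gem-free,
and a test vector on the first component has Rayleigh quotient `5800 / 1135 > 5.1`. -/

section Spectrum

variable {V W : Type*} [Fintype V] [Fintype W]

lemma specRad_eq_sSup_spectrum (G : SimpleGraph V) :
    specRad G = sSup (spectrum ℝ (G.adjMatrix ℝ)) := by
  simp only [specRad, ← Matrix.toLin'_apply', Module.End.hasEigenvalue_iff_mem_spectrum,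
    Matrix.spectrum_toLin']
  rfl

lemma specRad_congr {G : SimpleGraph V} {G' : SimpleGraph W} (φ : G ≃g G') :
    specRad G = specRad G' := by
  rw [specRad_eq_sSup_spectrum, specRad_eq_sSup_spectrum, ← φ.reindex_adjMatrix ℝ,
    ← Matrix.coe_reindexAlgEquiv ℝ ℝ, AlgEquiv.spectrum_eq]

lemma Matrix.IsHermitian.rayleigh_le_sSup_spectrum {n : Type*} [Fintype n] [DecidableEq n]
    {A : Matrix n n ℝ} (hA : A.IsHermitian) {w : n → ℝ} (hw : w ≠ 0) :
    (w ⬝ᵥ A *ᵥ w) / (w ⬝ᵥ w) ≤ sSup (spectrum ℝ A) := by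
  set T := Matrix.toEuclideanLin A
  set v : EuclideanSpace ℝ n := WithLp.toLp 2 w
  have hv : v ≠ 0 := by simpa [v] using hw
  have : Nontrivial (EuclideanSpace ℝ n) := ⟨⟨v, 0, hv⟩⟩
  have hμ := (Matrix.isSymmetric_toEuclideanLin_iff.mpr hA).hasEigenvalue_iSup_of_finiteDimensional
  rw [Module.End.hasEigenvalue_iff_mem_spectrum, Matrix.spectrum_toLpLin] at hμ
  refine le_trans ?_ (le_csSup (Matrix.finite_spectrum A).bddAbove hμ)
  have hbdd : BddAbove (Set.range fun x : {x : EuclideanSpace ℝ n // x ≠ 0} =>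
      RCLike.re (inner ℝ (T x) (x : EuclideanSpace ℝ n)) / ‖(x : EuclideanSpace ℝ n)‖ ^ 2) :=
    ⟨_, Set.forall_mem_range.2 fun x =>
      (abs_le.1 (T.toContinuousLinearMap.rayleighQuotient_le_norm x)).2⟩
  convert le_ciSup hbdd ⟨v, hv⟩ using 1
  · rw [← real_inner_self_eq_norm_sq, Matrix.toLpLin_toLp, EuclideanSpace.inner_toLp_toLp,
      EuclideanSpace.inner_toLp_toLp, RCLike.re_to_real, star_trivial, star_trivial,
      Matrix.toLin'_apply]
  · rfl

lemma rayleigh_le_specRad (G : SimpleGraph V) {w : V → ℝ} (hw : w ≠ 0) :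
    (w ⬝ᵥ G.adjMatrix ℝ *ᵥ w) / (w ⬝ᵥ w) ≤ specRad G :=
  specRad_eq_sSup_spectrum G ▸ (G.isHermitian_adjMatrix (R := ℝ)).rayleigh_le_sSup_spectrum hw

lemma sumElim_dotProduct_adjMatrix_sum_mulVec (G : SimpleGraph V) (H : SimpleGraph W)
    (w : V → ℝ) :
    Sum.elim w 0 ⬝ᵥ (G ⊕g H).adjMatrix ℝ *ᵥ Sum.elim w 0 = w ⬝ᵥ G.adjMatrix ℝ *ᵥ w := by
  simp [dotProduct, mulVec, Fintype.sum_sum_type, adjMatrix_apply]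

end Spectrum

section Gem

variable {V : Type*} {G : SimpleGraph V}

lemma containsCopy_gem {a b c d z : V} (hac : a ≠ c) (had : a ≠ d) (hbd : b ≠ d)
    (hab : G.Adj a b) (hbc : G.Adj b c) (hcd : G.Adj c d)
    (hza : G.Adj z a) (hzb : G.Adj z b) (hzc : G.Adj z c) (hzd : G.Adj z d) :
    ContainsCopy gem G := by
  refine ⟨⟨![a, b, c, d, z], ?_⟩, ?_⟩
  · intro s t hst
    fin_cases s <;> fin_cases t <;> simp_all [eq_comm, hab.ne, hbc.ne, hcd.ne]
  · intro s t hst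
    change G.Adj (![a, b, c, d, z] s) (![a, b, c, d, z] t)
    fin_cases s <;> fin_cases t <;> simp_all [gem, G.adj_comm]

lemma not_containsCopy_gem_of_forall_triangle {p q : V} (hpq : p ≠ q)
    (h : ∀ a b c, G.Adj a b → G.Adj b c → G.Adj a c →
      (p = a ∨ p = b ∨ p = c) ∧ (q = a ∨ q = b ∨ q = c)) :
    ¬ ContainsCopy gem G := by
  rintro ⟨f, hf⟩
  have hadj (s t : Fin 5) (hst : gem.Adj s t := by simp [gem]) : G.Adj (f s) (f t) := hf s t hst
  have apex : ∀ r, (r = f 0 ∨ r = f 1 ∨ r = f 4) → (r = f 2 ∨ r = f 3 ∨ r = f 4) → r = f 4 := by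
    rintro r (rfl | rfl | rfl) (h' | h' | h') <;>
      first | rfl | exact absurd (f.injective h') (by decide)
  have t₁ := h (f 0) (f 1) (f 4) (hadj 0 1) (hadj 1 4) (hadj 0 4)
  have t₂ := h (f 2) (f 3) (f 4) (hadj 2 3) (hadj 3 4) (hadj 2 4)
  exact hpq ((apex p t₁.1 t₂.1).trans (apex q t₁.2 t₂.2).symm)

end Gem

lemma InFamily.of_iso {V W : Type*} [Fintype V] [Fintype W] {G : SimpleGraph V}
    {G' : SimpleGraph W} {m : ℕ} (φ : G ≃g G') (h : InFamily m G) : InFamily m G' := by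
  obtain ⟨hgem, hedges, hiso, hbook⟩ := h
  refine ⟨?_, ?_, fun v => ?_, fun ⟨ψ⟩ => hbook ⟨φ.trans ψ⟩⟩
  · rintro ⟨f, hf⟩
    exact hgem ⟨f.trans φ.symm.toEquiv.toEmbedding,
      fun a b hab => φ.symm.map_adj_iff.2 (hf a b hab)⟩
  · rw [edgeCount, ← φ.card_edgeFinset_eq]
    exact hedges
  · obtain ⟨w, hw⟩ := hiso (φ.symm v)
    exact ⟨φ w, by simpa using φ.map_adj_iff.2 hw⟩

lemma card_edgeFinset_sum {V W : Type*} [Fintype V] [Fintype W]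
    (G : SimpleGraph V) (H : SimpleGraph W) :
    (G ⊕g H).edgeFinset.card = G.edgeFinset.card + H.edgeFinset.card := by
  simp only [edgeFinset_card, ← Fintype.card_sum]
  exact Fintype.card_congr edgeSetSumEquiv

-- Vertices `0, 1` span the `K₂`, `2, …, 11` are the pages, `12, 13` are pendant at `0`.
def pendantBookAdj (a b : Fin 14) : Prop :=
  a ≠ b ∧ (a = 0 ∨ b = 0 ∨ (a = 1 ∧ b.val ≤ 11) ∨ (b = 1 ∧ a.val ≤ 11))

instance : DecidableRel pendantBookAdj := fun _ _ => inferInstanceAs (Decidable (_ ∧ _))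

def pendantBook : SimpleGraph (Fin 14) where
  Adj := pendantBookAdj
  symm := ⟨fun _ _ h => ⟨h.1.symm, by have := h.2; tauto⟩⟩
  loopless := ⟨fun _ h => h.1 rfl⟩

lemma pendantBook_adj {a b : Fin 14} : pendantBook.Adj a b ↔ pendantBookAdj a b := Iff.rfl

lemma card_edgeFinset_pendantBook : pendantBook.edgeFinset.card = 23 := by
  have h := pendantBook.two_mul_card_edgeFinset
  have : (Finset.univ.filter fun p : Fin 14 × Fin 14 => pendantBookAdj p.1 p.2).card = 46 := by
    decide
  simp only [pendantBook_adj] at h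
  omega

def matchingGraph (j : ℕ) : SimpleGraph (Fin j × Fin 2) := (⊥ : SimpleGraph (Fin j)) □ ⊤

lemma matchingGraph_degree {j : ℕ} (v : Fin j × Fin 2) : (matchingGraph j).degree v = 1 := by
  have h := degree_boxProd (G := (⊥ : SimpleGraph (Fin j))) (H := (⊤ : SimpleGraph (Fin 2))) v
  rw [bot_degree, complete_graph_degree, Fintype.card_fin] at h
  convert h
  rfl

lemma card_edgeFinset_matchingGraph (j : ℕ) : (matchingGraph j).edgeFinset.card = j := by
  have h := (matchingGraph j).sum_degrees_eq_twice_card_edges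
  simp only [matchingGraph_degree, Finset.sum_const, Finset.card_univ, Fintype.card_prod,
    Fintype.card_fin, smul_eq_mul, mul_one] at h
  omega

lemma matchingGraph_adj {j : ℕ} {p q : Fin j × Fin 2} :
    (matchingGraph j).Adj p q ↔ p.1 = q.1 ∧ p.2 ≠ q.2 := by
  simp [matchingGraph, boxProd_adj, and_comm]

lemma matchingGraph_eq_of_adj {j : ℕ} {p q r : Fin j × Fin 2}
    (hq : (matchingGraph j).Adj p q) (hr : (matchingGraph j).Adj p r) : q = r := by
  rw [matchingGraph_adj] at hq hr
  ext <;> omega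

def comparisonGraph (j : ℕ) : SimpleGraph (Fin 14 ⊕ (Fin j × Fin 2)) :=
  pendantBook ⊕g matchingGraph j

lemma comparisonGraph_triangle_contains_zero_one {j : ℕ} (a b c : Fin 14 ⊕ (Fin j × Fin 2))
    (hab : (comparisonGraph j).Adj a b) (hbc : (comparisonGraph j).Adj b c)
    (hac : (comparisonGraph j).Adj a c) :
    (.inl 0 = a ∨ .inl 0 = b ∨ .inl 0 = c) ∧ (.inl 1 = a ∨ .inl 1 = b ∨ .inl 1 = c) := by
  have hbook : ∀ a b c : Fin 14, pendantBookAdj a b → pendantBookAdj b c → pendantBookAdj a c →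
      (0 = a ∨ 0 = b ∨ 0 = c) ∧ (1 = a ∨ 1 = b ∨ 1 = c) := by
    decide
  rcases a with a | a <;> rcases b with b | b <;> rcases c with c | c <;>
    simp only [comparisonGraph, sum_adj] at hab hbc hac
  · simpa using hbook a b c hab hbc hac
  · exact (hbc.ne (matchingGraph_eq_of_adj hab hac)).elim

lemma bookS_exists_adj_ne {k : ℕ} (hk : 1 ≤ k) (v : Fin 2 ⊕ Fin k) :
    ∃ w w', w ≠ w' ∧ (bookS k).Adj v w ∧ (bookS k).Adj v w' := by
  rcases v with i | r
  · exact ⟨.inl i.rev, .inr ⟨0, hk⟩, by simp, by fin_cases i <;> simp [bookS], by simp [bookS]⟩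
  · exact ⟨.inl 0, .inl 1, by simp, by simp [bookS], by simp [bookS]⟩

lemma comparisonGraph_eq_of_adj_twelve {j : ℕ} {v : Fin 14 ⊕ (Fin j × Fin 2)}
    (h : (comparisonGraph j).Adj (.inl 12) v) : v = .inl 0 := by
  have hbook : ∀ b : Fin 14, pendantBookAdj 12 b → b = 0 := by decide
  rcases v with b | q
  · exact congrArg _ (hbook b h)
  · simp [comparisonGraph] at h

lemma inFamily_comparisonGraph {m : ℕ} (hm : 23 ≤ m) : InFamily m (comparisonGraph (m - 23)) := by
  refine ⟨not_containsCopy_gem_of_forall_triangle (by simp)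
    comparisonGraph_triangle_contains_zero_one, ?_, ?_, ?_⟩
  · rw [edgeCount, comparisonGraph, card_edgeFinset_sum, card_edgeFinset_pendantBook,
      card_edgeFinset_matchingGraph]
    omega
  · rintro (a | ⟨i, c⟩)
    · obtain ⟨b, hb⟩ : ∃ b, pendantBookAdj a b := by revert a; decide
      exact ⟨.inl b, hb⟩
    · obtain ⟨c', hc'⟩ := exists_ne c
      exact ⟨.inr (i, c'), matchingGraph_adj.2 ⟨rfl, hc'.symm⟩⟩
  · rintro ⟨φ⟩
    obtain ⟨w, w', hne, hw, hw'⟩ := bookS_exists_adj_ne (by omega) (φ (.inl 12))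
    have hpendant : ∀ w, (bookS _).Adj (φ (.inl 12)) w → w = φ (.inl 0) := fun w hw => by
      rw [← φ.apply_symm_apply w,
        comparisonGraph_eq_of_adj_twelve (v := φ.symm w) (by simpa using φ.symm.map_adj_iff.2 hw)]
    exact hne ((hpendant w hw).trans (hpendant w' hw').symm)

-- An integer approximation of the Perron vector of `pendantBook`, whose spectral radius is ≈ 5.113.
def pendantBookTestVector (a : Fin 14) : ℕ := ![18, 17, 7, 7, 7, 7, 7, 7, 7, 7, 7, 7, 4, 4] a

lemma five_point_one_lt_specRad_comparisonGraph (j : ℕ) :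
    51 / 10 < specRad (comparisonGraph j) := by
  set w : Fin 14 → ℝ := fun a => pendantBookTestVector a
  have hquad : w ⬝ᵥ pendantBook.adjMatrix ℝ *ᵥ w = 5800 := by
    have : (∑ a, pendantBookTestVector a *
        ∑ b, if pendantBookAdj a b then pendantBookTestVector b else 0) = 5800 := by
      decide
    simp only [dotProduct, mulVec, adjMatrix_apply, pendantBook_adj, ite_mul, one_mul, zero_mul, w]
    exact_mod_cast this
  have hnorm : w ⬝ᵥ w = 1135 := by
    have : (∑ a, pendantBookTestVector a * pendantBookTestVector a) = 1135 := by decide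
    simp only [dotProduct, w]
    exact_mod_cast this
  have hw : Sum.elim w 0 ≠ (0 : Fin 14 ⊕ (Fin j × Fin 2) → ℝ) :=
    fun h => by simpa [w, pendantBookTestVector] using congrFun h (.inl 0)
  have h := rayleigh_le_specRad (pendantBook ⊕g matchingGraph j) hw
  rw [sumElim_dotProduct_adjMatrix_sum_mulVec, sumElim_dotProduct_sumElim,
    zero_dotProduct, add_zero, hquad, hnorm] at h
  exact lt_of_lt_of_le (by norm_num) h

lemma MaxInFamily.five_point_one_lt_specRad {V : Type*} [Fintype V] {G : SimpleGraph V}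
    {m : ℕ} (hm : 23 ≤ m) (h : MaxInFamily m G) : 51 / 10 < specRad G := by
  let φ := (comparisonGraph (m - 23)).overFinIso rfl
  calc (51 : ℝ) / 10 < specRad (comparisonGraph (m - 23)) :=
        five_point_one_lt_specRad_comparisonGraph _
    _ = specRad _ := specRad_congr φ
    _ ≤ specRad G := h.2 _ _ ((inFamily_comparisonGraph hm).of_iso φ)

section Triangle

variable {V : Type*} [Fintype V] {G : SimpleGraph V}

lemma adj_of_mem_Nplus {u v : V} (h : v ∈ Nplus G u) : G.Adj u v :=
  (mem_neighborFinset _ _ _).1 (Finset.mem_sdiff.1 h).1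

lemma neighborFinset_eq_of_not_containsCopy_gem (hG : ¬ ContainsCopy gem G) {u a b c : V}
    (hua : G.Adj u a) (hub : G.Adj u b) (huc : G.Adj u c)
    (hab : G.Adj a b) (hac : G.Adj a c) (hbc : G.Adj b c)
    (ha : ∀ w, G.Adj a w → w ∈ insert u (G.neighborFinset u)) :
    G.neighborFinset a = {u, b, c} := by
  ext w
  simp only [mem_neighborFinset, Finset.mem_insert, Finset.mem_singleton]
  refine ⟨fun haw => ?_, by rintro (rfl | rfl | rfl) <;> first | exact hua.symm | assumption⟩
  by_contra! hw
  obtain ⟨hwu, hwb, hwc⟩ := hw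
  have huw : G.Adj u w := by simpa [hwu] using ha w haw
  exact hG (containsCopy_gem hwb hwc hac.ne haw.symm hab hbc huw hua hub huc)

lemma eigen_eq_of_neighborFinset_eq {x : V → ℝ} {ρ : ℝ} (heig : G.adjMatrix ℝ *ᵥ x = ρ • x)
    {u a b c : V} (hub : u ≠ b) (huc : u ≠ c) (hbc : b ≠ c) (hN : G.neighborFinset a = {u, b, c}) :
    ρ * x a = x u + x b + x c := by
  have h := congrFun heig a
  rw [adjMatrix_mulVec_apply, hN, Finset.sum_insert (by simp [hub, huc]),
    Finset.sum_pair hbc] at h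
  rw [← smul_eq_mul, ← Pi.smul_apply, ← h, add_assoc]

end Triangle

lemma lt_of_triangle_eigen_eqs {ρ t a b c : ℝ} (hρ : 51 / 10 < ρ) (ha : 0 < a)
    (ea : ρ * a = t + b + c) (eb : ρ * b = t + a + c) (ec : ρ * c = t + a + b) :
    a < 10 / 31 * t ∧ b < 10 / 31 * t ∧ c < 10 / 31 * t := by
  have hab : a = b := by
    have : (ρ + 1) * (a - b) = 0 := by linear_combination ea - eb
    linarith [(mul_eq_zero.1 this).resolve_left (by linarith)]
  have hac : a = c := by
    have : (ρ + 1) * (a - c) = 0 := by linear_combination ea - ec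
    linarith [(mul_eq_zero.1 this).resolve_left (by linarith)]
  subst hab hac
  have hlt : a < 10 / 31 * t := by nlinarith
  exact ⟨hlt, hlt, hlt⟩

theorem stmt10_general {V : Type*} [Fintype V] (G : SimpleGraph V) (m : ℕ)
    (hm : 23 ≤ m) (hmax : MaxInFamily m G)
    (x : V → ℝ) (hx : ∀ v, 0 < x v)
    (heig : G.adjMatrix ℝ *ᵥ x = specRad G • x)
    (u : V)
    (u₁ u₂ u₃ : V) (h1 : u₁ ∈ Nplus G u) (h2 : u₂ ∈ Nplus G u) (h3 : u₃ ∈ Nplus G u)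
    (h12 : G.Adj u₁ u₂) (h13 : G.Adj u₁ u₃) (h23 : G.Adj u₂ u₃)
    (hW : ∀ i ∈ ({u₁, u₂, u₃} : Finset V), ∀ w, G.Adj i w →
      w ∈ insert u (G.neighborFinset u)) :
    x u₁ < 10 / 31 * x u ∧ x u₂ < 10 / 31 * x u ∧ x u₃ < 10 / 31 * x u := by
  have hu₁ := adj_of_mem_Nplus h1
  have hu₂ := adj_of_mem_Nplus h2
  have hu₃ := adj_of_mem_Nplus h3
  have hgem := hmax.1.1
  have hN₁ := neighborFinset_eq_of_not_containsCopy_gem hgem hu₁ hu₂ hu₃ h12 h13 h23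
    (hW u₁ (by simp))
  have hN₂ := neighborFinset_eq_of_not_containsCopy_gem hgem hu₂ hu₁ hu₃ h12.symm h23 h13
    (hW u₂ (by simp))
  have hN₃ := neighborFinset_eq_of_not_containsCopy_gem hgem hu₃ hu₁ hu₂ h13.symm h23.symm h12
    (hW u₃ (by simp))
  exact lt_of_triangle_eigen_eqs (hmax.five_point_one_lt_specRad hm) (hx u₁)
    (eigen_eq_of_neighborFinset_eq heig hu₂.ne hu₃.ne h23.ne hN₁)
    (eigen_eq_of_neighborFinset_eq heig hu₁.ne hu₃.ne h13.ne hN₂)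
    (eigen_eq_of_neighborFinset_eq heig hu₁.ne hu₂.ne h12.ne hN₃)

theorem stmt10 {V : Type*} [Fintype V] (G : SimpleGraph V) (m : ℕ)
    (hodd : Odd m) (hm : 23 ≤ m) (hmax : MaxInFamily m G)
    (x : V → ℝ) (hx : ∀ v, 0 < x v)
    (heig : G.adjMatrix ℝ *ᵥ x = specRad G • x)
    (u : V) (hu : ∀ v, x v ≤ x u)
    (u₁ u₂ u₃ : V) (h1 : u₁ ∈ Nplus G u) (h2 : u₂ ∈ Nplus G u) (h3 : u₃ ∈ Nplus G u)
    (h12 : G.Adj u₁ u₂) (h13 : G.Adj u₁ u₃) (h23 : G.Adj u₂ u₃)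
    (hW : ∀ i ∈ ({u₁, u₂, u₃} : Finset V), ∀ w, G.Adj i w →
      w ∈ insert u (G.neighborFinset u)) :
    x u₁ < 10 / 31 * x u ∧ x u₂ < 10 / 31 * x u ∧ x u₃ < 10 / 31 * x u :=
  stmt10_general G m hm hmax x hx heig u u₁ u₂ u₃ h1 h2 h3 h12 h13 h23 hW
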